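/- If a set system 𝒞 on Z with VC dimension d shatters (via its robust/derived loss) a set of m points where each point contributes at most k candidate elements, then 2^m ≤ (m k)^d whenever m k ≥ d ≥ 1; consequently m ≤ C · d · log₂(k+1) for some universal constant C (for k ≥ 2). -/

import Mathlib

/-!
The trace map `h ↦ {z ∈ N | h z}` on the union `N` of the perturbation sets of `K` (so `#N ≤ mk`)
determines the whole robust-loss pattern of `h` on `K`. Hence the `2 ^ m` patterns realised on `K`
need `2 ^ m` distinct traces on `N`, and Sauer–Shelah bounds the number of traces by
`∑ i ≤ d, C(mk, i)`. For `d ≥ 2` this sum is at most `(mk) ^ d`; for `d = 1` it is `mk + 1`, and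
`2 ^ m = mk + 1` is impossible since `m ∤ 2 ^ m - 1` for `m ≥ 2`. For the logarithmic bound,
`∑ i ≤ d, C(M, i) * t ^ d ≤ (1 + t) ^ M ≤ exp (t M)` with `t = 1 / (2k)` gives
`2 ^ m ≤ exp (m / 2) * (2k) ^ d`, and `log 2 - 1 / 2 ≥ log 2 / 4`.
-/

/-- A class of boolean functions `F` on `Z` shatters the finite set `K`. -/
def ShattersFun {Z : Type*} (F : Set (Z → Bool)) (K : Finset Z) : Prop :=
  ∀ T ⊆ K, ∃ f ∈ F, ∀ z ∈ K, (f z = true ↔ z ∈ T)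

open Finset
open scoped Nat

theorem not_dvd_two_pow_sub_one {m : ℕ} (hm : 2 ≤ m) : ¬ m ∣ 2 ^ m - 1 := by
  intro hdvd
  set p := m.minFac
  have hp : p.Prime := Nat.minFac_prime (by omega)
  have := Fact.mk hp
  have h2m : (2 : ZMod p) ^ m = 1 := by
    have := (ZMod.natCast_eq_zero_iff _ _).2 ((Nat.minFac_dvd m).trans hdvd)
    rw [Nat.cast_sub Nat.one_le_two_pow, sub_eq_zero] at this
    exact_mod_cast this
  have h2p : (2 : ZMod p) ^ (p - 1) = 1 :=
    ZMod.pow_card_sub_one_eq_one fun h ↦ by simp [h, zero_pow (by omega : m ≠ 0)] at h2m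
  -- every prime factor of `m` is at least `p`, so `m` is coprime to `p - 1`
  have hcop : m.gcd (p - 1) = 1 := by
    have := hp.two_le
    exact Nat.coprime_of_lt_minFac (by omega) (by omega)
  have h21 : (2 : ZMod p) = 1 := by simpa [hcop] using pow_gcd_eq_one.2 ⟨h2m, h2p⟩
  simp [← one_add_one_eq_two] at h21

theorem two_pow_le_mul_of_two_pow_le_mul_add_one {m k : ℕ} (hm : 1 ≤ m) (hk : 2 ≤ k)
    (h : 2 ^ m ≤ m * k + 1) : 2 ^ m ≤ m * k := by
  obtain rfl | hm2 := hm.eq_or_lt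
  · simpa using hk
  have hne : 2 ^ m ≠ m * k + 1 := fun heq ↦ not_dvd_two_pow_sub_one hm2 ⟨k, by omega⟩
  omega

theorem sum_range_choose_le_pow {n d : ℕ} (hn : 2 ≤ n) (hd : 2 ≤ d) :
    ∑ i ∈ range (d + 1), n.choose i ≤ n ^ d := by
  induction d, hd using Nat.le_induction with
  | base =>
    obtain ⟨n, rfl⟩ : ∃ n', n = n' + 2 := ⟨n - 2, by omega⟩
    have h := Nat.descFactorial_eq_factorial_mul_choose (n + 2) 2
    simp [Nat.descFactorial, sum_range_succ] at h ⊢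
    nlinarith
  | succ d hd ih =>
    have hchoose : n.choose (d + 1) * 2 ≤ n ^ d * n := by
      calc n.choose (d + 1) * 2 ≤ n.choose (d + 1) * (d + 1)! :=
            Nat.mul_le_mul_left _ ((by omega : 2 ≤ d + 1).trans (Nat.self_le_factorial _))
        _ = n.descFactorial (d + 1) := by rw [Nat.descFactorial_eq_factorial_mul_choose, mul_comm]
        _ ≤ n ^ d * n := (Nat.descFactorial_le_pow n _).trans_eq (pow_succ n d)
    rw [sum_range_succ, pow_succ]
    nlinarith [Nat.mul_le_mul_left (n ^ d) hn]

theorem sum_range_choose_mul_pow_le {M d : ℕ} {t : ℝ} (ht0 : 0 ≤ t) (ht1 : t ≤ 1) :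
    (∑ i ∈ range (d + 1), (M.choose i : ℝ)) * t ^ d ≤ (1 + t) ^ M := by
  rw [sum_mul]
  calc ∑ i ∈ range (d + 1), (M.choose i : ℝ) * t ^ d
      ≤ ∑ i ∈ range (d + 1), t ^ i * M.choose i := by
        refine sum_le_sum fun i hi ↦ ?_
        rw [mul_comm]
        have hid : i ≤ d := Nat.lt_succ_iff.1 (mem_range.1 hi)
        exact mul_le_mul_of_nonneg_right (pow_le_pow_of_le_one ht0 ht1 hid) (by positivity)
    _ ≤ ∑ i ∈ range (max d M + 1), t ^ i * M.choose i :=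
        sum_le_sum_of_subset_of_nonneg (range_subset_range.2 (by omega)) fun _ _ _ ↦ by positivity
    _ = ∑ i ∈ range (M + 1), t ^ i * M.choose i := by
        refine (sum_subset (range_subset_range.2 (by omega)) fun i _ hi ↦ ?_).symm
        simp [Nat.choose_eq_zero_of_lt (by simpa using hi : M < i)]
    _ = (1 + t) ^ M := by simp [add_comm 1 t, add_pow]

theorem le_mul_logb_of_two_pow_le_sum_choose {m k d : ℕ} (hk : 1 ≤ k)
    (h : 2 ^ m ≤ ∑ i ∈ range (d + 1), (m * k).choose i) :
    (m : ℝ) ≤ 8 * d * Real.logb 2 (k + 1) := by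
  have hk' : (1 : ℝ) ≤ k := by exact_mod_cast hk
  set t : ℝ := (2 * k)⁻¹
  have ht1 : t ≤ 1 := inv_le_one_of_one_le₀ (by linarith)
  have hexp : (2 : ℝ) ^ m ≤ Real.exp (m / 2) * ((k + 1) ^ 2) ^ d := by
    calc (2 : ℝ) ^ m ≤ (∑ i ∈ range (d + 1), ((m * k).choose i : ℝ)) * t ^ d * (2 * k) ^ d := by
          rw [mul_assoc, ← mul_pow, inv_mul_cancel₀ (by positivity), one_pow, mul_one]
          exact_mod_cast h
      _ ≤ (1 + t) ^ (m * k) * (2 * k) ^ d := by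
          gcongr
          exact sum_range_choose_mul_pow_le (by positivity) ht1
      _ ≤ Real.exp t ^ (m * k) * ((k + 1) ^ 2) ^ d := by
          gcongr
          · linarith [Real.add_one_le_exp t]
          · nlinarith
      _ = Real.exp (m / 2) * ((k + 1) ^ 2) ^ d := by
          rw [← Real.exp_nat_mul]
          congr 2
          simp only [t]
          push_cast
          field_simp
  have hlog : (m : ℝ) * Real.log 2 ≤ m / 2 + 2 * d * Real.log (k + 1) := by
    have := Real.log_le_log (by positivity) hexp
    rw [Real.log_mul (by positivity) (by positivity), Real.log_exp, ← pow_mul, Real.log_pow,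
      Real.log_pow] at this
    push_cast at this
    linarith
  have hlog2 := Real.log_two_gt_d9
  have hlogk : 0 ≤ Real.log (k + 1) := Real.log_nonneg (by linarith)
  rw [Real.logb, mul_div_assoc', le_div_iff₀ (by positivity)]
  nlinarith

theorem card_le_sum_choose_of_shatters_card_le {α : Type*} [DecidableEq α]
    {𝒜 : Finset (Finset α)} {N : Finset α} {d : ℕ} (h𝒜 : ∀ s ∈ 𝒜, s ⊆ N)
    (hd : ∀ s, 𝒜.Shatters s → #s ≤ d) :
    #𝒜 ≤ ∑ i ∈ range (d + 1), (#N).choose i := by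
  calc #𝒜 ≤ #𝒜.shatterer := card_le_card_shatterer 𝒜
    _ ≤ #((range (d + 1)).biUnion N.powersetCard) := by
      refine card_le_card fun s hs ↦ mem_biUnion.2 ⟨#s, ?_, mem_powersetCard.2 ⟨?_, rfl⟩⟩
      · exact mem_range.2 (Nat.lt_succ_of_le (hd s (mem_shatterer.1 hs)))
      · obtain ⟨t, ht, hst⟩ := (mem_shatterer.1 hs).exists_superset
        exact hst.trans (h𝒜 t ht)
    _ ≤ ∑ i ∈ range (d + 1), (#N).choose i := card_biUnion_le.trans_eq (by simp)

section Traces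

variable {Z : Type*}

open Classical in
noncomputable def traces (H : Set (Z → Bool)) (N : Finset Z) : Finset (Finset Z) :=
  N.powerset.filter fun A ↦ ∃ h ∈ H, N.filter (h · = true) = A

theorem mem_traces {H : Set (Z → Bool)} {N : Finset Z} {A : Finset Z} :
    A ∈ traces H N ↔ ∃ h ∈ H, N.filter (h · = true) = A := by
  simp only [traces, mem_filter, mem_powerset, and_iff_right_iff_imp]
  rintro ⟨h, -, rfl⟩
  exact filter_subset _ _

theorem subset_of_mem_traces {H : Set (Z → Bool)} {N A : Finset Z} (hA : A ∈ traces H N) :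
    A ⊆ N := by
  obtain ⟨h, -, rfl⟩ := mem_traces.1 hA
  exact filter_subset _ _

theorem shattersFun_of_shatters_traces [DecidableEq Z] {H : Set (Z → Bool)} {N s : Finset Z}
    (hs : (traces H N).Shatters s) : ShattersFun H s := by
  have hsN : s ⊆ N := by
    obtain ⟨A, hA, hsA⟩ := hs.exists_superset
    exact hsA.trans (subset_of_mem_traces hA)
  intro T hT
  obtain ⟨A, hA, hsA⟩ := hs hT
  obtain ⟨h, hH, rfl⟩ := mem_traces.1 hA
  refine ⟨h, hH, fun z hz ↦ ?_⟩
  simp [← hsA, hz, hsN hz]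

theorem card_traces_le [DecidableEq Z] {H : Set (Z → Bool)} {d : ℕ}
    (hH : ∀ K : Finset Z, ShattersFun H K → #K ≤ d) (N : Finset Z) :
    #(traces H N) ≤ ∑ i ∈ range (d + 1), (#N).choose i :=
  card_le_sum_choose_of_shatters_card_le (fun _ ↦ subset_of_mem_traces)
    fun _ hs ↦ hH _ (shattersFun_of_shatters_traces hs)

def robustLoss (per : Z → Finset Z) (h : Z → Bool) (p : Z × Bool) : Bool :=
  decide (∃ z ∈ per p.1, h z ≠ p.2)

theorem two_pow_card_le_card_traces [DecidableEq Z] {H : Set (Z → Bool)} {per : Z → Finset Z}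
    {K : Finset (Z × Bool)} (hK : ShattersFun (robustLoss per '' H) K) :
    2 ^ #K ≤ #(traces H (K.biUnion fun p ↦ per p.1)) := by
  set N := K.biUnion fun p ↦ per p.1
  let lossPattern (A : Finset Z) : Finset (Z × Bool) :=
    K.filter fun p ↦ ∃ z ∈ per p.1, decide (z ∈ A) ≠ p.2
  have hsurj : K.powerset ⊆ (traces H N).image lossPattern := by
    intro T hT
    obtain ⟨_, ⟨h, hH, rfl⟩, hhT⟩ := hK T (mem_powerset.1 hT)
    refine mem_image.2 ⟨N.filter (h · = true), mem_traces.2 ⟨h, hH, rfl⟩, ?_⟩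
    ext p
    by_cases hp : p ∈ K
    · rw [← hhT p hp]
      simp only [lossPattern, mem_filter, hp, true_and, robustLoss, decide_eq_true_eq]
      refine exists_congr fun z ↦ and_congr_right fun hz ↦ ?_
      have hzN : z ∈ N := mem_biUnion.2 ⟨p, hp, hz⟩
      simp [hzN]
    · simpa [lossPattern, hp] using fun hpT ↦ hp (mem_powerset.1 hT hpT)
  calc 2 ^ #K = #K.powerset := (card_powerset K).symm
    _ ≤ #((traces H N).image lossPattern) := card_le_card hsurj
    _ ≤ #(traces H N) := card_image_le

end Traces

/-- Abstract counting form of the VC bound for finite-perturbation loss classes: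
if a class `H` of VC dimension at most `d` induces a robust-loss class that shatters
`m` labeled points, where each point contributes at most `k` candidate perturbations,
then `2^m ≤ (mk)^d` (whenever `mk ≥ d ≥ 1`), and consequently `m ≤ c · d · log₂(k+1)`
for a universal constant `c` (for `k ≥ 2`). -/
theorem stmt7 : ∃ c : ℝ, 0 < c ∧
    ∀ (Z : Type) (H : Set (Z → Bool)) (per : Z → Finset Z) (m k d : ℕ),
      1 ≤ d → d ≤ m * k → 2 ≤ k →
      (∀ x, (per x).card ≤ k) →
      (∀ K : Finset Z, ShattersFun H K → K.card ≤ d) →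
      ∀ K : Finset (Z × Bool), K.card = m →
        ShattersFun ((fun h => fun p : Z × Bool =>
          decide (∃ z ∈ per p.1, h z ≠ p.2)) '' H) K →
        2 ^ m ≤ (m * k) ^ d ∧ (m : ℝ) ≤ c * d * Real.logb 2 (k + 1) := by
  refine ⟨8, by norm_num, ?_⟩
  intro Z H per m k d hd hdmk hk hper hH K hKcard hK
  classical
  have hm : 1 ≤ m := Nat.pos_of_ne_zero fun hm ↦ by simp [hm] at hdmk; omega
  set N := K.biUnion fun p ↦ per p.1
  have hS : 2 ^ m ≤ ∑ i ∈ range (d + 1), (m * k).choose i := by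
    have hN : #N ≤ m * k := hKcard ▸ card_biUnion_le_card_mul _ _ _ fun p _ ↦ hper p.1
    calc 2 ^ m = 2 ^ #K := by rw [hKcard]
      _ ≤ #(traces H N) := two_pow_card_le_card_traces hK
      _ ≤ ∑ i ∈ range (d + 1), (#N).choose i := card_traces_le hH N
      _ ≤ ∑ i ∈ range (d + 1), (m * k).choose i :=
        sum_le_sum fun i _ ↦ Nat.choose_le_choose i hN
  refine ⟨?_, le_mul_logb_of_two_pow_le_sum_choose (by omega) hS⟩
  obtain rfl | hd2 := hd.eq_or_lt
  · simp only [sum_range_succ, sum_range_zero, Nat.choose_zero_right, Nat.choose_one_right] at hS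
    exact (two_pow_le_mul_of_two_pow_le_mul_add_one hm hk (by omega)).trans_eq (pow_one _).symm
  · exact hS.trans (sum_range_choose_le_pow (by nlinarith) hd2)
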